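/- Let c be a complex number with c = a/q + γ, where a, q are coprime Gaussian integers, q ≠ 0, |γ| ≤ |q|⁻². If n is a Gaussian integer with 0 < |n|² ≤ |q|²/8, then ‖nc‖ ≥ 1/(√8·|q|), where ‖z‖ := max{‖Re(z)‖, ‖Im(z)‖} and ‖x‖ denotes the distance from the real number x to the nearest integer. -/

import Mathlib

/-!
Since `n` is nonzero and `|n| < |q|`, coprimality forces `q ∤ n a`, so `n a / q` lies at
distance at least `1/|q|` from every Gaussian integer, hence at sup-distance at least
`1/(√2 |q|)` from the nearest one. The perturbation `n γ` has modulus at most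
`|n|/|q|² ≤ 1/(√8 |q|)`, which is exactly half of that margin.
-/

open Complex GaussianInt

/-- Distance from a real number to the nearest integer. -/
noncomputable def nint (x : ℝ) : ℝ := ⨅ n : ℤ, |x - (n : ℝ)|

/-- Sup-norm distance from a complex number to the nearest Gaussian integer. -/
noncomputable def nintC (z : ℂ) : ℝ := max (nint z.re) (nint z.im)

lemma nint_eq_abs_sub_round (x : ℝ) : nint x = |x - round x| :=
  le_antisymm (ciInf_le ⟨0, by rintro _ ⟨m, rfl⟩; exact abs_nonneg _⟩ (round x))
    (le_ciInf (round_le x))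

lemma nint_sub_abs_le_nint_add (x y : ℝ) : nint x - |y| ≤ nint (x + y) := by
  rw [nint_eq_abs_sub_round, nint_eq_abs_sub_round]
  have := abs_sub (x + y - round (x + y)) y
  rw [show x + y - round (x + y) - y = x - round (x + y) by ring] at this
  linarith [round_le x (round (x + y))]

lemma nintC_sub_norm_le_nintC_add (z w : ℂ) : nintC z - ‖w‖ ≤ nintC (z + w) := by
  have hre := nint_sub_abs_le_nint_add z.re w.re
  have him := nint_sub_abs_le_nint_add z.im w.im
  have := abs_re_le_norm w
  have := abs_im_le_norm w
  rw [nintC, nintC, add_re, add_im]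
  rcases le_total (nint z.re) (nint z.im) with h | h
  · rw [max_eq_right h]; linarith [le_max_right (nint (z.re + w.re)) (nint (z.im + w.im))]
  · rw [max_eq_left h]; linarith [le_max_left (nint (z.re + w.re)) (nint (z.im + w.im))]

noncomputable def GaussianInt.round (z : ℂ) : GaussianInt := ⟨_root_.round z.re, _root_.round z.im⟩

lemma GaussianInt.norm_sub_round_le (z : ℂ) : ‖z - GaussianInt.round z‖ ≤ √2 * nintC z := by
  refine (norm_le_sqrt_two_mul_max _).trans (le_of_eq ?_)
  simp [nintC, nint_eq_abs_sub_round, GaussianInt.round, toComplex_def]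

lemma GaussianInt.one_le_norm_toComplex {m : GaussianInt} (hm : m ≠ 0) : 1 ≤ ‖(m : ℂ)‖ := by
  have h : (1 : ℝ) ≤ ‖(m : ℂ)‖ ^ 2 := by
    rw [Complex.sq_norm, ← intCast_real_norm]
    exact_mod_cast norm_pos.2 hm
  nlinarith [_root_.norm_nonneg (m : ℂ)]

lemma GaussianInt.norm_toComplex_le_of_dvd {q n : GaussianInt} (hn : n ≠ 0) (h : q ∣ n) :
    ‖(q : ℂ)‖ ≤ ‖(n : ℂ)‖ := by
  obtain ⟨k, rfl⟩ := h
  have hk : k ≠ 0 := by rintro rfl; simp at hn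
  rw [toComplex_mul, norm_mul]
  exact le_mul_of_one_le_right (_root_.norm_nonneg _) (one_le_norm_toComplex hk)

lemma GaussianInt.inv_norm_le_norm_div_sub {q b : GaussianInt} (hq : q ≠ 0) (hb : ¬ q ∣ b)
    (g : GaussianInt) : ‖(q : ℂ)‖⁻¹ ≤ ‖(b : ℂ) / q - g‖ := by
  have hqC : (q : ℂ) ≠ 0 := toComplex_eq_zero.not.2 hq
  have hne : b - g * q ≠ 0 := fun h => hb ⟨g, by linear_combination h⟩
  have hsplit : ((b - g * q : GaussianInt) : ℂ) = ((b : ℂ) / q - g) * q := by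
    push_cast [toComplex_mul, toComplex_sub]
    field_simp
  rw [inv_le_iff_one_le_mul₀ (norm_pos_iff.2 hqC), ← norm_mul, ← hsplit]
  exact one_le_norm_toComplex hne

lemma GaussianInt.inv_le_nintC_div {q b : GaussianInt} (hq : q ≠ 0) (hb : ¬ q ∣ b) :
    (√2 * ‖(q : ℂ)‖)⁻¹ ≤ nintC ((b : ℂ) / q) := by
  have hqpos : 0 < ‖(q : ℂ)‖ := norm_pos_iff.2 (toComplex_eq_zero.not.2 hq)
  have h := (inv_norm_le_norm_div_sub hq hb _).trans (norm_sub_round_le _)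
  rw [inv_le_iff_one_le_mul₀ hqpos] at h
  rw [inv_le_iff_one_le_mul₀ (by positivity)]
  linarith

lemma mul_le_inv_sqrt_eight_mul {r s Q : ℝ} (hr : 0 ≤ r) (hQ : 0 < Q) (hrQ : r ^ 2 ≤ Q ^ 2 / 8)
    (hsQ : s ≤ Q⁻¹ ^ 2) : r * s ≤ (√8 * Q)⁻¹ := by
  have hr8 : r ≤ Q / √8 := by
    rw [le_div_iff₀ (by positivity)]
    refine le_of_pow_le_pow_left₀ two_ne_zero hQ.le ?_
    rw [mul_pow, Real.sq_sqrt (by norm_num)]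
    linarith
  calc r * s ≤ r * Q⁻¹ ^ 2 := by gcongr
    _ ≤ Q / √8 * Q⁻¹ ^ 2 := by gcongr
    _ = (√8 * Q)⁻¹ := by field_simp

theorem gaussian_small_norm_lower_bound_general (c γ : ℂ) (a q : GaussianInt)
    (hcop : IsCoprime a q) (hc : c = (a : ℂ) / (q : ℂ) + γ)
    (hγ : ‖γ‖ ≤ (‖(q : ℂ)‖)⁻¹ ^ 2)
    (n : GaussianInt) (hn : n ≠ 0)
    (hsize : ‖(n : ℂ)‖ ^ 2 ≤ ‖(q : ℂ)‖ ^ 2 / 8) :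
    1 / (Real.sqrt 8 * ‖(q : ℂ)‖) ≤ nintC ((n : ℂ) * c) := by
  set Q := ‖(q : ℂ)‖
  have hn1 := one_le_norm_toComplex hn
  have hQ : 0 < Q := by nlinarith [norm_nonneg (q : ℂ)]
  have hq : q ≠ 0 := by rintro rfl; simp [Q] at hQ
  have hndvd : ¬ q ∣ n * a := fun h =>
    absurd (norm_toComplex_le_of_dvd hn (hcop.symm.dvd_of_dvd_mul_right h)) (by nlinarith)
  have hfar := inv_le_nintC_div hq hndvd
  have hsmall : ‖(n : ℂ) * γ‖ ≤ (√8 * Q)⁻¹ :=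
    norm_mul (n : ℂ) γ ▸ mul_le_inv_sqrt_eight_mul (norm_nonneg _) hQ hsize hγ
  have h8 : √8 = 2 * √2 := by
    rw [show (8 : ℝ) = 2 ^ 2 * 2 by norm_num, Real.sqrt_mul (by positivity), Real.sqrt_sq two_pos.le]
  calc 1 / (√8 * Q) = (√2 * Q)⁻¹ - (√8 * Q)⁻¹ := by rw [h8]; field_simp; ring
    _ ≤ nintC ((n : ℂ) * a / q) - ‖(n : ℂ) * γ‖ := by push_cast [toComplex_mul] at hfar; gcongr
    _ ≤ nintC ((n : ℂ) * c) := by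
      rw [hc, mul_add, ← mul_div_assoc]; exact nintC_sub_norm_le_nintC_add _ _

/-- If `c = a/q + γ` with `(a,q) = 1`, `|γ| ≤ |q|⁻²`, and `n` is a nonzero Gaussian
integer with `|n|² ≤ |q|²/8`, then `‖nc‖ ≥ 1/(√8·|q|)`. -/
theorem gaussian_small_norm_lower_bound (c γ : ℂ) (a q : GaussianInt) (hq : q ≠ 0)
    (hcop : IsCoprime a q) (hc : c = (a : ℂ) / (q : ℂ) + γ)
    (hγ : ‖γ‖ ≤ (‖(q : ℂ)‖)⁻¹ ^ 2)
    (n : GaussianInt) (hn : n ≠ 0)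
    (hsize : ‖(n : ℂ)‖ ^ 2 ≤ ‖(q : ℂ)‖ ^ 2 / 8) :
    1 / (Real.sqrt 8 * ‖(q : ℂ)‖) ≤ nintC ((n : ℂ) * c) :=
  gaussian_small_norm_lower_bound_general c γ a q hcop hc hγ n hn hsize
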